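/- For every y ∈ WH_b there is a unique element C_y ∈ H̃ such that (1) overline(C_y) = C_y and (2) C_y ≡ T_y mod H̃_{<0}. -/

import Mathlib

noncomputable section

open scoped Pointwise

/-- The general linear group `GL_n(K)`. -/
abbrev GLn (K : Type) [Field K] (n : ℕ) : Type := GL (Fin n) K

/-- `g` is a permutation matrix. -/
def IsPermMat {K : Type} [Field K] {n : ℕ} (g : GLn K n) : Prop :=
  ∃ σ : Equiv.Perm (Fin n),
    ∀ i j : Fin n, (g : Matrix (Fin n) (Fin n) K) i j = if σ j = i then 1 else 0

/-- `W`, the group of permutation matrices in `GL_n(K)`. -/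
def Wset (K : Type) [Field K] (n : ℕ) : Set (GLn K n) := {g | IsPermMat g}

/-- The set `S = {s_1, …, s_{n-1}}` of Coxeter generators of `W`: the matrices of the
adjacent transpositions `(i, i+1)`. -/
def Sset (K : Type) [Field K] (n : ℕ) : Set (GLn K n) :=
  {g | ∃ i j : Fin n, (i : ℕ) + 1 = (j : ℕ) ∧
    ∀ k l : Fin n, (g : Matrix (Fin n) (Fin n) K) k l = if Equiv.swap i j l = k then 1 else 0}

/-- The set `𝒯 = { w s_i w⁻¹ : w ∈ W, s_i ∈ S }` of reflections of `W`. -/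
def Tset (K : Type) [Field K] (n : ℕ) : Set (GLn K n) :=
  {t | ∃ w ∈ Wset K n, ∃ s ∈ Sset K n, t = w * s * w⁻¹}

/-- `H_b`: the group of diagonal matrices whose entries are `b`-th roots of unity
(i.e. entries in `F_b`). -/
def Hbset (K : Type) [Field K] (n b : ℕ) : Set (GLn K n) :=
  {g | (∀ i j : Fin n, i ≠ j → (g : Matrix (Fin n) (Fin n) K) i j = 0) ∧
    ∀ i : Fin n, (g : Matrix (Fin n) (Fin n) K) i i ^ b = 1}

/-- The group `WH_b`: the set of products `w * d` with `w ∈ W` and `d ∈ H_b`. -/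
def WHbset (K : Type) [Field K] (n b : ℕ) : Set (GLn K n) :=
  {x | ∃ w ∈ Wset K n, ∃ d ∈ Hbset K n b, x = w * d}

/-- The length function on monomial matrices: the number of inversions of the underlying
permutation.  For `x = w d ∈ WH_b` this is the Coxeter length `ℓ(w)`, i.e. `len` is the
length function of `W` lifted to `WH_b` via `ℓ(wd) = ℓ(dw) = ℓ(w)`. -/
def len {K : Type} [Field K] {n : ℕ} (g : GLn K n) : ℕ :=
  Set.ncard {p : Fin n × Fin n | p.1 < p.2 ∧ ∃ i i' : Fin n, i' < i ∧
    (g : Matrix (Fin n) (Fin n) K) i p.1 ≠ 0 ∧ (g : Matrix (Fin n) (Fin n) K) i' p.2 ≠ 0}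

/-- The diagonal matrix `h_{k,l}(α) = h_k(α) h_l((-1)^{b-1} α⁻¹)`. -/
def hmat (K : Type) [Field K] {n : ℕ} (b : ℕ) (k l : Fin n) (α : K) :
    Matrix (Fin n) (Fin n) K :=
  Matrix.diagonal fun p => if p = k then α else if p = l then (-1 : K) ^ (b - 1) * α⁻¹ else 1

/-- For a reflection `t` interchanging the `k`-th and `l`-th standard basis vectors
(`t = w s_i w⁻¹`), the subset `X_t = { w h_{i,i+1}(α) w⁻¹ : α ∈ F_b } =
{ h_{k,l}(α) : α^b = 1 }` of `H_b`. -/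
def Xset (K : Type) [Field K] (n b : ℕ) (t : GLn K n) : Set (GLn K n) :=
  {d | ∃ k l : Fin n, ∃ α : K, α ^ b = 1 ∧ k ≠ l ∧
    (∀ p q : Fin n, (t : Matrix (Fin n) (Fin n) K) p q = if Equiv.swap k l q = p then 1 else 0) ∧
    (d : Matrix (Fin n) (Fin n) K) = hmat K b k l α}

/-- `X_s = { h_{k,l}(α) : α^b = 1 }` for the simple reflection `s` interchanging the
`k`-th and `l`-th standard basis vectors. -/
def XsPair (K : Type) [Field K] {n : ℕ} (b : ℕ) (k l : Fin n) : Set (GLn K n) :=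
  {d | ∃ α : K, α ^ b = 1 ∧ (d : Matrix (Fin n) (Fin n) K) = hmat K b k l α}

/-- The product `X_1 ⋯ X_r` of a list of subsets of a monoid. -/
def SetProd {G : Type} [Monoid G] : List (Set G) → Set G
  | [] => {1}
  | X :: L => X * SetProd L

/-- `U`: the group of upper triangular unipotent matrices. -/
def Uset (K : Type) [Field K] (n : ℕ) : Set (GLn K n) :=
  {g | (∀ i j : Fin n, j < i → (g : Matrix (Fin n) (Fin n) K) i j = 0) ∧
    ∀ i : Fin n, (g : Matrix (Fin n) (Fin n) K) i i = 1}

/-- `H_a`: the group of diagonal matrices with entries in `F_a` (the `a`-th roots of unity). -/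
def Haset (K : Type) [Field K] (n a : ℕ) : Set (GLn K n) :=
  {g | (∀ i j : Fin n, i ≠ j → (g : Matrix (Fin n) (Fin n) K) i j = 0) ∧
    ∀ i : Fin n, (g : Matrix (Fin n) (Fin n) K) i i ^ a = 1}

/-- `B_a = H_a U`. -/
def Baset (K : Type) [Field K] (n a : ℕ) : Set (GLn K n) :=
  {g | ∃ h ∈ Haset K n a, ∃ u ∈ Uset K n, g = h * u}

/-- `ℤ_b`, the localization of `ℤ` at `b`. -/
abbrev Zloc (b : ℕ) : Type := Localization.Away (b : ℤ)

/-- `Ã = ℤ_b[v, v⁻¹]`, realized as Laurent polynomials over `ℤ_b`. -/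
abbrev Atil (b : ℕ) : Type := LaurentPolynomial (Zloc b)

/-- The element `v/b - v⁻¹/b` of `Ã`. -/
def vbq (b : ℕ) : Atil b :=
  LaurentPolynomial.C (Localization.Away.invSelf (b : ℤ)) *
    (LaurentPolynomial.T 1 - LaurentPolynomial.T (-1))

/-- `Ã_{<0} = v⁻¹ ℤ_b[v⁻¹]`, the set of Laurent polynomials supported in negative
powers of `v`. -/
def AtilNeg (b : ℕ) : Set (Atil b) :=
  {f | ∃ (p : Polynomial (Zloc b)) (N : ℕ), p.degree < (N : ℕ) ∧
    f = Polynomial.toLaurent p * LaurentPolynomial.T (-(N : ℤ))}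

namespace KLaux
open LaurentPolynomial

variable {R : Type} [CommRing R]

lemma coeff_C_mul_T (a : R) (m k : ℤ) :
    (C a * T m : R[T;T⁻¹]).coeff k = if m = k then a else 0 := by
  rw [← single_eq_C_mul_T]; exact Finsupp.single_apply

lemma mul_T_apply (f : R[T;T⁻¹]) (m k : ℤ) : (f * T m : R[T;T⁻¹]).coeff k = f.coeff (k - m) := by
  have h := AddMonoidAlgebra.coeff_mul_single_apply f (1:R) m k
  rw [mul_one] at h
  exact h

lemma toLaurent_apply_coe (p : Polynomial R) (m : ℕ) :
    (Polynomial.toLaurent p).coeff (m : ℤ) = p.coeff m := by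
  rw [coeff_toLaurent]
  exact Finsupp.mapDomain_apply Nat.cast_injective _ _

lemma toLaurent_apply_neg (p : Polynomial R) (m : ℤ) (hm : m < 0) :
    (Polynomial.toLaurent p).coeff m = 0 := by
  rw [coeff_toLaurent]
  apply Finsupp.mapDomain_notin_range
  rintro ⟨a, rfl⟩
  have : (0:ℤ) ≤ Nat.castEmbedding a := Int.natCast_nonneg a
  omega

lemma trunc_coeff (f : R[T;T⁻¹]) (m : ℕ) : (trunc f).coeff m = f.coeff (m : ℤ) := by
  induction f using LaurentPolynomial.induction_on' with
  | add p q hp hq => simp only [map_add, Polynomial.coeff_add, hp, hq]; rfl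
  | C_mul_T n a =>
    rw [trunc_C_mul_T, coeff_C_mul_T]
    by_cases h1 : 0 ≤ n
    · rw [if_pos h1, Polynomial.coeff_monomial]
      have hiff : n.toNat = m ↔ n = ↑m := by omega
      by_cases h2 : n = (m:ℤ)
      · rw [if_pos (hiff.mpr h2), if_pos h2]
      · rw [if_neg (fun hc => h2 (hiff.mp hc)), if_neg h2]
    · rw [if_neg h1, Polynomial.coeff_zero, if_neg (by omega)]

lemma mem_AtilNeg_iff {b : ℕ} (f : Atil b) :
    f ∈ AtilNeg b ↔ ∀ k : ℤ, 0 ≤ k → f.coeff k = 0 := by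
  constructor
  · rintro ⟨p, N, hdeg, rfl⟩ k hk
    rw [mul_T_apply]
    have : (k - -(N:ℤ)) = ((k.toNat + N : ℕ) : ℤ) := by omega
    rw [this, toLaurent_apply_coe]
    exact Polynomial.coeff_eq_zero_of_degree_lt (lt_of_lt_of_le hdeg (by exact_mod_cast le_add_self))
  · intro hf
    -- choose N bounding the support from below
    obtain ⟨N, hN⟩ : ∃ N : ℕ, ∀ m ∈ f.coeff.support, -(N:ℤ) ≤ m := by
      refine ⟨(f.coeff.support.sup fun m => m.natAbs), fun m hm => ?_⟩
      have h1 : m.natAbs ≤ f.coeff.support.sup (fun m => m.natAbs) :=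
        Finset.le_sup (f := fun m : ℤ => m.natAbs) hm
      have h2 := Int.natAbs_eq m
      omega
    refine ⟨trunc (f * T N), N, ?_, ?_⟩
    · rw [Polynomial.degree_lt_iff_coeff_zero]
      intro m hm
      rw [trunc_coeff, mul_T_apply]
      have hm' : (N:ℤ) ≤ (m : ℤ) := by exact_mod_cast hm
      exact hf _ (by omega)
    · ext k
      rw [mul_T_apply]
      by_cases hk : 0 ≤ k - -(N:ℤ)
      · have : k - -(N:ℤ) = ((k - -(N:ℤ)).toNat : ℤ) := by omega
        rw [this, toLaurent_apply_coe, trunc_coeff, mul_T_apply]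
        congr 1
        omega
      · rw [toLaurent_apply_neg _ _ (by omega)]
        by_cases hk0 : 0 ≤ k
        · exact hf k hk0
        · rcases eq_or_ne (f.coeff k) 0 with h0 | h0
          · exact h0
          · exact absurd (hN k (Finsupp.mem_support_iff.mpr h0)) (by omega)

lemma barA_eq_invert {b : ℕ} (barA : Atil b →+* Atil b)
    (hbarv : barA (T 1) = T (-1))
    (hbarC : ∀ r : Zloc b, barA (C r) = C r) (f : Atil b) :
    barA f = invert f := by
  have hTn : ∀ m : ℕ, barA (T (m : ℤ)) = T (-(m : ℤ)) := by
    intro m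
    have : (T (m:ℤ) : Atil b) = (T 1)^m := by rw [T_pow]; norm_num
    rw [this, map_pow, hbarv, T_pow]
    congr 1; omega
  have hT : ∀ m : ℤ, barA (T m) = T (-m) := by
    intro m
    rcases le_or_gt 0 m with hm | hm
    · lift m to ℕ using hm; exact hTn m
    · have h1 : (T m * T (-m) : Atil b) = 1 := by rw [← T_add]; simp [T_zero]
      have h2 := congrArg barA h1
      rw [map_mul, map_one] at h2
      have hm' : (0:ℤ) ≤ -m := by omega
      have h3 : barA (T (-m)) = T m := by
        have := hTn (-m).toNat
        rw [Int.toNat_of_nonneg hm'] at this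
        simpa using this
      rw [h3] at h2
      -- h2 : barA (T m) * T m = 1
      have h4 : (T (-m) * T m : Atil b) = 1 := by rw [← T_add]; simp [T_zero]
      calc barA (T m) = barA (T m) * (T m * T (-m)) := by rw [h1, mul_one]
        _ = (barA (T m) * T m) * T (-m) := by ring
        _ = T (-m) := by rw [h2, one_mul]
  induction f using LaurentPolynomial.induction_on' with
  | add p q hp hq => rw [map_add, map_add, hp, hq]
  | C_mul_T n a => rw [map_mul, map_mul, hbarC, hT, invert_C, invert_T]

lemma eq_zero_of_invert_eq {b : ℕ} (f : Atil b) (hinv : invert f = f)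
    (hneg : ∀ k : ℤ, 0 ≤ k → f.coeff k = 0) : f = 0 := by
  ext k
  rcases le_or_gt 0 k with hk | hk
  · simp [hneg k hk]
  · have : f.coeff k = (invert f).coeff (-k) := by rw [invert_apply]; norm_num
    rw [hinv] at this
    rw [this, hneg (-k) (by omega)]
    rfl

/-- The bar-invariant "nonnegative part plus its mirror" of a Laurent polynomial. -/
def rho {b : ℕ} (f : Atil b) : Atil b :=
  Polynomial.toLaurent (trunc f) + invert (Polynomial.toLaurent (trunc f)) - C (f.coeff 0)

lemma invert_rho {b : ℕ} (f : Atil b) : invert (rho f) = rho f := by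
  unfold rho
  rw [map_sub, map_add, involutive_invert _, invert_C]
  ring

lemma rho_spec {b : ℕ} (f : Atil b) (k : ℤ) (hk : 0 ≤ k) : (f - rho f).coeff k = 0 := by
  have h1 : (Polynomial.toLaurent (trunc f)).coeff k = f.coeff k := by
    have : k = ((k.toNat : ℕ) : ℤ) := by omega
    rw [this, toLaurent_apply_coe, trunc_coeff]
  have h2 : (invert (Polynomial.toLaurent (trunc f))).coeff k = if k = 0 then f.coeff 0 else 0 := by
    rw [invert_apply]
    by_cases h : k = 0
    · subst h
      rw [if_pos rfl, neg_zero]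
      have h0 := toLaurent_apply_coe (trunc f) 0
      rw [trunc_coeff] at h0
      simpa using h0
    · rw [toLaurent_apply_neg _ _ (by omega), if_neg h]
  have hC : (C (f.coeff 0) : Atil b).coeff k = if k = 0 then f.coeff 0 else 0 := by
    have := coeff_C_mul_T (f.coeff 0) 0 k
    rw [T_zero, mul_one] at this
    rw [this]
    simp [eq_comm]
  have hsub : ∀ (g h : Atil b) (j : ℤ), (g - h).coeff j = g.coeff j - h.coeff j := fun _ _ _ => rfl
  have hadd : ∀ (g h : Atil b) (j : ℤ), (g + h).coeff j = g.coeff j + h.coeff j := fun _ _ _ => rfl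
  rw [show f - rho f = f - (Polynomial.toLaurent (trunc f)
      + invert (Polynomial.toLaurent (trunc f)) - C (f.coeff 0)) from rfl,
    hsub, hsub, hadd, h1, h2, hC]
  ring

end KLaux

theorem Equiv.Perm.apply_inv_self {α : Type*} (σ : Equiv.Perm α) (x : α) : σ (σ⁻¹ x) = x :=
  Equiv.apply_symm_apply σ x

theorem Equiv.Perm.inv_apply_self {α : Type*} (σ : Equiv.Perm α) (x : α) : σ⁻¹ (σ x) = x :=
  Equiv.symm_apply_apply σ x

namespace KLaux2
open Equiv

variable {n b : ℕ}

/-- The matrix of an element of `GL_n`. -/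
abbrev Mat {n : ℕ} (g : GLn ℂ n) : Matrix (Fin n) (Fin n) ℂ := (g : Matrix (Fin n) (Fin n) ℂ)

/-- `g` is monomial with underlying permutation `σ`. -/
def Mono (g : GLn ℂ n) (σ : Equiv.Perm (Fin n)) : Prop :=
  ∀ i j : Fin n, Mat g i j ≠ 0 ↔ σ j = i

/-- number of inversions of a permutation -/
def Inv (σ : Equiv.Perm (Fin n)) : ℕ :=
  Set.ncard {p : Fin n × Fin n | p.1 < p.2 ∧ σ p.2 < σ p.1}

lemma mono_entry {g : GLn ℂ n} {σ : Perm (Fin n)} (h : Mono g σ) (i j : Fin n) :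
    Mat g i j = if σ j = i then Mat g (σ j) j else 0 := by
  by_cases hij : σ j = i
  · rw [if_pos hij, hij]
  · rw [if_neg hij]
    by_contra hne
    exact hij ((h i j).mp hne)

lemma mono_nonzero {g : GLn ℂ n} {σ : Perm (Fin n)} (h : Mono g σ) (j : Fin n) :
    Mat g (σ j) j ≠ 0 := (h _ j).mpr rfl

lemma len_eq_inv {g : GLn ℂ n} {σ : Perm (Fin n)} (h : Mono g σ) : len g = Inv σ := by
  unfold len Inv
  congr 1
  ext p
  simp only [Set.mem_setOf_eq, and_congr_right_iff]
  intro _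
  constructor
  · rintro ⟨i, i', hlt, h1, h2⟩
    rw [(h i p.1).mp h1, (h i' p.2).mp h2]
    exact hlt
  · intro hlt
    exact ⟨σ p.1, σ p.2, hlt, mono_nonzero h p.1, mono_nonzero h p.2⟩

lemma mul_entry {x y : GLn ℂ n} {τ : Perm (Fin n)} (hy : Mono y τ) (i j : Fin n) :
    Mat (x * y) i j = Mat x i (τ j) * Mat y (τ j) j := by
  have hval : Mat (x * y) = Mat x * Mat y := Units.val_mul x y
  rw [hval, Matrix.mul_apply]
  rw [Finset.sum_eq_single (τ j)]
  · intro k _ hk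
    rw [mono_entry hy k j, if_neg (show ¬ τ j = k from fun hc => hk hc.symm), mul_zero]
  · intro hk
    exact absurd (Finset.mem_univ _) hk

lemma mono_mul {x y : GLn ℂ n} {σ τ : Perm (Fin n)} (hx : Mono x σ) (hy : Mono y τ) :
    Mono (x * y) (σ * τ) := by
  intro i j
  rw [mul_entry hy, mul_ne_zero_iff]
  constructor
  · rintro ⟨h1, _⟩
    exact (hx i (τ j)).mp h1
  · intro h
    exact ⟨(hx i (τ j)).mpr h, mono_nonzero hy j⟩

lemma coe_inv_mul (x : GLn ℂ n) : Mat x⁻¹ * Mat x = 1 := by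
  have h := congrArg Units.val (inv_mul_cancel x)
  rwa [Units.val_mul, Units.val_one] at h

lemma inv_entry {x : GLn ℂ n} {σ : Perm (Fin n)} (hx : Mono x σ) (i j : Fin n) :
    Mat x⁻¹ i j = if σ⁻¹ j = i then (Mat x j (σ⁻¹ j))⁻¹ else 0 := by
  classical
  set Z : Matrix (Fin n) (Fin n) ℂ :=
    Matrix.of (fun a c => if σ⁻¹ c = a then (Mat x c (σ⁻¹ c))⁻¹ else 0) with hZ
  have hxZ : Mat x * Z = 1 := by
    ext a c
    have hnz : Mat x c (σ⁻¹ c) ≠ 0 := by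
      have := mono_nonzero hx (σ⁻¹ c)
      rwa [Equiv.Perm.apply_inv_self] at this
    have hval : Mat x a (σ⁻¹ c) = if c = a then Mat x c (σ⁻¹ c) else 0 := by
      rw [mono_entry hx a (σ⁻¹ c), Equiv.Perm.apply_inv_self]
    rw [Matrix.mul_apply, Finset.sum_eq_single (σ⁻¹ c)]
    · rw [hZ]
      simp only [Matrix.of_apply, eq_self_iff_true, if_true]
      rw [hval]
      by_cases hac : c = a
      · subst hac
        rw [if_pos rfl, mul_inv_cancel₀ hnz, Matrix.one_apply_eq]
      · rw [if_neg hac, zero_mul, Matrix.one_apply_ne (show a ≠ c from fun hc => hac hc.symm)]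
    · intro k _ hk
      rw [hZ]
      simp only [Matrix.of_apply]
      rw [if_neg (show ¬ σ⁻¹ c = k from fun hc => hk hc.symm), mul_zero]
    · intro hk
      exact absurd (Finset.mem_univ _) hk
  have hinv : Mat x⁻¹ = Z := by
    calc Mat x⁻¹ = Mat x⁻¹ * (Mat x * Z) := by rw [hxZ, mul_one]
    _ = (Mat x⁻¹ * Mat x) * Z := by rw [Matrix.mul_assoc]
    _ = Z := by rw [coe_inv_mul, Matrix.one_mul]
  rw [hinv, hZ]
  rfl

lemma mono_inv {x : GLn ℂ n} {σ : Perm (Fin n)} (hx : Mono x σ) : Mono x⁻¹ σ⁻¹ := by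
  intro i j
  rw [inv_entry hx]
  by_cases h : σ⁻¹ j = i
  · rw [if_pos h]
    simp only [h, iff_true]
    apply inv_ne_zero
    have := mono_nonzero hx (σ⁻¹ j)
    rwa [Equiv.Perm.apply_inv_self, h] at this
  · rw [if_neg h]
    simpa using h

/-- the permutation matrix as a matrix -/
def P (σ : Perm (Fin n)) : Matrix (Fin n) (Fin n) ℂ :=
  Matrix.of fun i j => if σ j = i then 1 else 0

lemma P_mul (σ τ : Perm (Fin n)) : P σ * P τ = P (σ * τ) := by
  ext a c
  rw [Matrix.mul_apply, Finset.sum_eq_single (τ c)]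
  · simp only [P, Matrix.of_apply, eq_self_iff_true, if_true]
    rw [mul_one]
    rfl
  · intro k _ hk
    simp only [P, Matrix.of_apply]
    rw [if_neg (show ¬ τ c = k from fun hc => hk hc.symm), mul_zero]
  · intro hk
    exact absurd (Finset.mem_univ _) hk

lemma P_one : P (1 : Perm (Fin n)) = 1 := by
  ext a c
  simp only [P, Matrix.of_apply, Perm.one_apply, Matrix.one_apply, eq_comm]

/-- the permutation matrix as a unit -/
def wU (σ : Perm (Fin n)) : GLn ℂ n :=
  ⟨P σ, P σ⁻¹, by rw [P_mul, mul_inv_cancel, P_one], by rw [P_mul, inv_mul_cancel, P_one]⟩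

lemma wU_val (σ : Perm (Fin n)) : Mat (wU σ) = P σ := rfl

lemma wU_mem_W (σ : Perm (Fin n)) : wU σ ∈ Wset ℂ n :=
  ⟨σ, fun _ _ => rfl⟩

lemma mono_wU (σ : Perm (Fin n)) : Mono (wU σ) σ := by
  intro i j
  show (if σ j = i then (1:ℂ) else 0) ≠ 0 ↔ σ j = i
  by_cases h : σ j = i
  · simp [h]
  · simp [h]

/-- a diagonal unit -/
def dU (c : Fin n → ℂ) (hc : ∀ j, c j ≠ 0) : GLn ℂ n :=
  ⟨Matrix.diagonal c, Matrix.diagonal (fun j => (c j)⁻¹),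
    by rw [Matrix.diagonal_mul_diagonal]
       have h : (fun i => c i * (c i)⁻¹) = fun _ => (1:ℂ) :=
         funext fun j => mul_inv_cancel₀ (hc j)
       rw [h]
       exact Matrix.diagonal_one,
    by rw [Matrix.diagonal_mul_diagonal]
       have h : (fun i => (c i)⁻¹ * c i) = fun _ => (1:ℂ) :=
         funext fun j => inv_mul_cancel₀ (hc j)
       rw [h]
       exact Matrix.diagonal_one⟩

lemma whb_of_mono {x : GLn ℂ n} {σ : Perm (Fin n)} (hx : Mono x σ)
    (hroot : ∀ j, (Mat x (σ j) j) ^ b = 1) : x ∈ WHbset ℂ n b := by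
  classical
  refine ⟨wU σ, wU_mem_W σ, dU (fun j => Mat x (σ j) j) (fun j => mono_nonzero hx j),
    ⟨?_, ?_⟩, ?_⟩
  · intro i j hij
    show (Matrix.diagonal _ : Matrix (Fin n) (Fin n) ℂ) i j = 0
    exact Matrix.diagonal_apply_ne _ hij
  · intro i
    show (Matrix.diagonal _ : Matrix (Fin n) (Fin n) ℂ) i i ^ b = 1
    rw [Matrix.diagonal_apply_eq]
    exact hroot i
  · apply Units.ext
    rw [Units.val_mul]
    show Mat x = P σ * Matrix.diagonal _
    ext a c
    rw [Matrix.mul_diagonal, mono_entry hx a c]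
    simp only [P, Matrix.of_apply]
    by_cases h : σ c = a
    · rw [if_pos h, if_pos h, one_mul]
    · rw [if_neg h, if_neg h, zero_mul]

lemma mono_of_whb (hb : 0 < b) {x : GLn ℂ n} (hx : x ∈ WHbset ℂ n b) :
    ∃ σ : Perm (Fin n), Mono x σ ∧ ∀ j, (Mat x (σ j) j) ^ b = 1 := by
  obtain ⟨w, ⟨σ, hw⟩, d, ⟨hd1, hd2⟩, rfl⟩ := hx
  have hw' : ∀ i j, Mat w i j = if σ j = i then 1 else 0 := hw
  have hd1' : ∀ i j : Fin n, i ≠ j → Mat d i j = 0 := hd1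
  have hd2' : ∀ i : Fin n, Mat d i i ^ b = 1 := hd2
  have hdmono : Mono d 1 := by
    intro i j
    constructor
    · intro hne
      by_contra hij
      exact hne (hd1' i j (fun hc => hij hc.symm))
    · intro hij
      simp only [Perm.one_apply] at hij
      subst hij
      intro h0
      have h2 := hd2' j
      rw [h0, zero_pow hb.ne'] at h2
      exact zero_ne_one h2
  have hwmono : Mono w σ := by
    intro i j
    rw [hw' i j]
    by_cases h : σ j = i
    · simp [h]
    · simp [h]
  have hmono : Mono (w * d) (σ * 1) := mono_mul hwmono hdmono
  rw [mul_one] at hmono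
  refine ⟨σ, hmono, fun j => ?_⟩
  have he : Mat (w * d) (σ j) j = Mat w (σ j) ((1 : Perm (Fin n)) j) * Mat d ((1 : Perm (Fin n)) j) j :=
    mul_entry hdmono (σ j) j
  simp only [Perm.one_apply] at he
  rw [he, hw' (σ j) j, if_pos rfl, one_mul]
  exact hd2' j

lemma whb_mul (hb : 0 < b) {x y : GLn ℂ n} (hx : x ∈ WHbset ℂ n b)
    (hy : y ∈ WHbset ℂ n b) : x * y ∈ WHbset ℂ n b := by
  obtain ⟨σ, hxm, hxr⟩ := mono_of_whb hb hx
  obtain ⟨τ, hym, hyr⟩ := mono_of_whb hb hy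
  apply whb_of_mono (mono_mul hxm hym)
  intro j
  rw [mul_entry hym]
  rw [mul_pow]
  have h : (σ * τ) j = σ (τ j) := rfl
  rw [h, hxr (τ j), hyr j, one_mul]

lemma whb_inv (hb : 0 < b) {x : GLn ℂ n} (hx : x ∈ WHbset ℂ n b) :
    x⁻¹ ∈ WHbset ℂ n b := by
  obtain ⟨σ, hxm, hxr⟩ := mono_of_whb hb hx
  apply whb_of_mono (mono_inv hxm)
  intro j
  rw [inv_entry hxm, if_pos rfl, inv_pow]
  have h := hxr (σ⁻¹ j)
  rw [Equiv.Perm.apply_inv_self] at h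
  rw [h, inv_one]

lemma hb_mem_whb (hb : 0 < b) {d : GLn ℂ n} (hd : d ∈ Hbset ℂ n b) :
    d ∈ WHbset ℂ n b :=
  ⟨1, ⟨1, by intro i j; rw [Units.val_one]; simp [Matrix.one_apply, Perm.one_apply, eq_comm]⟩,
    d, hd, (one_mul d).symm⟩

lemma mono_of_hb (hb : 0 < b) {d : GLn ℂ n} (hd : d ∈ Hbset ℂ n b) : Mono d 1 := by
  have hd1 : ∀ i j : Fin n, i ≠ j → Mat d i j = 0 := hd.1
  have hd2 : ∀ i : Fin n, Mat d i i ^ b = 1 := hd.2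
  intro i j
  constructor
  · intro hne
    by_contra hij
    exact hne (hd1 i j (fun hc => hij hc.symm))
  · intro hij
    simp only [Perm.one_apply] at hij
    subst hij
    intro h0
    have h2 := hd2 j
    rw [h0, zero_pow hb.ne'] at h2
    exact zero_ne_one h2

lemma hb_inv_mem (hb : 0 < b) {d : GLn ℂ n} (hd : d ∈ Hbset ℂ n b) :
    d⁻¹ ∈ Hbset ℂ n b := by
  have hm := mono_of_hb hb hd
  have hd2 : ∀ i : Fin n, Mat d i i ^ b = 1 := hd.2
  constructor
  · intro i j hij
    show Mat d⁻¹ i j = 0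
    rw [inv_entry hm, if_neg]
    simp only [inv_one, Perm.one_apply]
    exact fun hc => hij hc.symm
  · intro i
    show Mat d⁻¹ i i ^ b = 1
    rw [inv_entry hm]
    simp only [inv_one, Perm.one_apply, eq_self_iff_true, if_true]
    rw [inv_pow, hd2 i, inv_one]

lemma inv_one_perm : Inv (1 : Perm (Fin n)) = 0 := by
  unfold Inv
  rw [Set.ncard_eq_zero]
  ext p
  simp only [Set.mem_setOf_eq, Perm.one_apply, Set.mem_empty_iff_false, iff_false, not_and]
  exact fun h1 h2 => absurd h2 (asymm h1)

lemma len_of_hb (hb : 0 < b) {d : GLn ℂ n} (hd : d ∈ Hbset ℂ n b) : len d = 0 := by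
  rw [len_eq_inv (mono_of_hb hb hd)]
  exact inv_one_perm

lemma mono_unique {x : GLn ℂ n} {σ τ : Perm (Fin n)} (hσ : Mono x σ) (hτ : Mono x τ) :
    σ = τ :=
  Equiv.ext fun j => ((hτ _ j).mp (mono_nonzero hσ j)).symm

lemma hb_of_mono_one (hb : 0 < b) {x : GLn ℂ n} {σ : Perm (Fin n)}
    (hx : x ∈ WHbset ℂ n b) (hm : Mono x σ) (h1 : σ = 1) : x ∈ Hbset ℂ n b := by
  subst h1
  obtain ⟨σ', hm', hr'⟩ := mono_of_whb hb hx
  have hσ : σ' = 1 := mono_unique hm' hm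
  subst hσ
  constructor
  · intro i j hij
    show Mat x i j = 0
    by_contra hne
    exact hij ((hm i j).mp hne).symm
  · intro i
    have := hr' i
    simpa using this

end KLaux2
namespace KLaux2
open Equiv

variable {n b : ℕ}

lemma val_ne {u w : Fin n} (h : u ≠ w) : (u:ℕ) ≠ (w:ℕ) := fun hv => h (Fin.val_injective hv)

lemma nat_swap_lt (iv jv av cv : ℕ) (hij : iv + 1 = jv)
    (h1 : ¬(av = iv ∧ cv = jv)) (h2 : ¬(av = jv ∧ cv = iv)) :
    ((if av = iv then jv else if av = jv then iv else av) <
      (if cv = iv then jv else if cv = jv then iv else cv)) ↔ av < cv := by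
  split_ifs <;> omega

lemma swap_val_nat {i j : Fin n} (a : Fin n) :
    ((Equiv.swap i j a : Fin n) : ℕ)
      = if (a:ℕ) = (i:ℕ) then (j:ℕ) else if (a:ℕ) = (j:ℕ) then (i:ℕ) else (a:ℕ) := by
  rcases eq_or_ne a i with h | h
  · rw [h, Equiv.swap_apply_left, if_pos rfl]
  · rw [if_neg (val_ne h)]
    rcases eq_or_ne a j with h2 | h2
    · rw [h2, Equiv.swap_apply_right, if_pos rfl]
    · rw [if_neg (val_ne h2), Equiv.swap_apply_of_ne_of_ne h h2]

lemma swap_lt_iff {i j a c : Fin n} (hij : (i:ℕ)+1 = (j:ℕ))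
    (h1 : ¬(a = i ∧ c = j)) (h2 : ¬(a = j ∧ c = i)) :
    Equiv.swap i j a < Equiv.swap i j c ↔ a < c := by
  rw [Fin.lt_def, Fin.lt_def, swap_val_nat, swap_val_nat]
  refine nat_swap_lt (i:ℕ) (j:ℕ) (a:ℕ) (c:ℕ) hij ?_ ?_
  · rintro ⟨e1, e2⟩
    exact h1 ⟨Fin.val_injective e1, Fin.val_injective e2⟩
  · rintro ⟨e1, e2⟩
    exact h2 ⟨Fin.val_injective e1, Fin.val_injective e2⟩

lemma inv_swap_mul (σ : Perm (Fin n)) {i j : Fin n} (hij : (i:ℕ)+1 = (j:ℕ)) :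
    (σ⁻¹ i < σ⁻¹ j ∧ Inv (Equiv.swap i j * σ) = Inv σ + 1) ∨
    (σ⁻¹ j < σ⁻¹ i ∧ Inv σ = Inv (Equiv.swap i j * σ) + 1) := by
  classical
  have hijne : i ≠ j := fun h => by rw [h] at hij; omega
  set u := σ⁻¹ i with hu
  set w := σ⁻¹ j with hw
  have hσu : σ u = i := Equiv.Perm.apply_inv_self σ i
  have hσw : σ w = j := Equiv.Perm.apply_inv_self σ j
  have huw : u ≠ w := fun h => hijne (by rw [← hσu, ← hσw, h])
  have hij_lt : i < j := by rw [Fin.lt_def]; omega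
  have hBiff : ∀ p : Fin n × Fin n, p ≠ (u, w) → p ≠ (w, u) →
      (Equiv.swap i j (σ p.2) < Equiv.swap i j (σ p.1) ↔ σ p.2 < σ p.1) := by
    intro p hne1 hne2
    apply swap_lt_iff hij
    · rintro ⟨e1, e2⟩
      apply hne2
      have hp2 : p.2 = u := by rw [hu, ← e1, Equiv.Perm.inv_apply_self]
      have hp1 : p.1 = w := by rw [hw, ← e2, Equiv.Perm.inv_apply_self]
      exact Prod.ext hp1 hp2
    · rintro ⟨e1, e2⟩
      apply hne1
      have hp2 : p.2 = w := by rw [hw, ← e1, Equiv.Perm.inv_apply_self]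
      have hp1 : p.1 = u := by rw [hu, ← e2, Equiv.Perm.inv_apply_self]
      exact Prod.ext hp1 hp2
  have hswapuw : Equiv.swap i j (σ w) < Equiv.swap i j (σ u) := by
    rw [hσu, hσw, Equiv.swap_apply_right, Equiv.swap_apply_left]
    exact hij_lt
  rcases huw.lt_or_gt with hlt | hlt
  · left
    refine ⟨hlt, ?_⟩
    have hset : {p : Fin n × Fin n | p.1 < p.2 ∧ (Equiv.swap i j * σ) p.2 < (Equiv.swap i j * σ) p.1}
        = insert (u, w) {p : Fin n × Fin n | p.1 < p.2 ∧ σ p.2 < σ p.1} := by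
      ext p
      simp only [Set.mem_setOf_eq, Set.mem_insert_iff, Equiv.Perm.mul_apply]
      constructor
      · rintro ⟨hplt, hsw⟩
        by_cases hp1 : p = (u, w)
        · exact Or.inl hp1
        · have hp2 : p ≠ (w, u) := by
            rintro rfl
            exact absurd hplt (asymm hlt)
          exact Or.inr ⟨hplt, (hBiff p hp1 hp2).mp hsw⟩
      · rintro (rfl | ⟨hplt, hA⟩)
        · exact ⟨hlt, hswapuw⟩
        · have hp1 : p ≠ (u, w) := by
            rintro rfl
            rw [hσu, hσw] at hA
            exact absurd hA (asymm hij_lt)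
          have hp2 : p ≠ (w, u) := by
            rintro rfl
            exact absurd hplt (asymm hlt)
          exact ⟨hplt, (hBiff p hp1 hp2).mpr hA⟩
    show Set.ncard _ = Set.ncard _ + 1
    rw [hset]
    refine Set.ncard_insert_of_notMem ?_ (Set.toFinite _)
    rintro ⟨-, hc⟩
    have hc' : σ w < σ u := hc
    rw [hσu, hσw] at hc'
    exact absurd hc' (asymm hij_lt)
  · right
    refine ⟨hlt, ?_⟩
    have hset : {p : Fin n × Fin n | p.1 < p.2 ∧ σ p.2 < σ p.1}
        = insert (w, u) {p : Fin n × Fin n | p.1 < p.2 ∧ (Equiv.swap i j * σ) p.2 < (Equiv.swap i j * σ) p.1} := by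
      ext p
      simp only [Set.mem_setOf_eq, Set.mem_insert_iff, Equiv.Perm.mul_apply]
      constructor
      · rintro ⟨hplt, hA⟩
        by_cases hp2 : p = (w, u)
        · exact Or.inl hp2
        · have hp1 : p ≠ (u, w) := by
            rintro rfl
            exact absurd hplt (asymm hlt)
          exact Or.inr ⟨hplt, (hBiff p hp1 hp2).mpr hA⟩
      · rintro (rfl | ⟨hplt, hB⟩)
        · refine ⟨hlt, ?_⟩
          show σ u < σ w
          rw [hσu, hσw]
          exact hij_lt
        · have hp1 : p ≠ (u, w) := by
            rintro rfl
            exact absurd hplt (asymm hlt)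
          have hp2 : p ≠ (w, u) := by
            rintro rfl
            have hB' : Equiv.swap i j (σ u) < Equiv.swap i j (σ w) := hB
            rw [hσu, hσw, Equiv.swap_apply_left, Equiv.swap_apply_right] at hB'
            exact absurd hB' (asymm hij_lt)
          exact ⟨hplt, (hBiff p hp1 hp2).mp hB⟩
    show Set.ncard _ = Set.ncard _ + 1
    rw [hset]
    refine Set.ncard_insert_of_notMem ?_ (Set.toFinite _)
    rintro ⟨-, hc⟩
    have hc' : Equiv.swap i j (σ u) < Equiv.swap i j (σ w) := hc
    rw [hσu, hσw, Equiv.swap_apply_left, Equiv.swap_apply_right] at hc'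
    exact absurd hc' (asymm hij_lt)

lemma inv_inv_perm (σ : Perm (Fin n)) : Inv σ⁻¹ = Inv σ := by
  unfold Inv
  have himg : {p : Fin n × Fin n | p.1 < p.2 ∧ σ⁻¹ p.2 < σ⁻¹ p.1}
      = (fun p : Fin n × Fin n => (σ p.2, σ p.1)) '' {p | p.1 < p.2 ∧ σ p.2 < σ p.1} := by
    ext q
    constructor
    · rintro ⟨h1, h2⟩
      exact ⟨(σ⁻¹ q.2, σ⁻¹ q.1), ⟨h2, by simpa using h1⟩, by simp [Prod.ext_iff]⟩
    · rintro ⟨p, ⟨h1, h2⟩, rfl⟩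
      exact ⟨h2, by simpa using h1⟩
  rw [himg, Set.ncard_image_of_injective]
  intro p q hpq
  simp only [Prod.mk.injEq] at hpq
  exact Prod.ext (σ.injective hpq.2) (σ.injective hpq.1)

lemma strictMono_of_adj (f : Fin n → Fin n)
    (h : ∀ i j : Fin n, (i:ℕ)+1 = (j:ℕ) → f i < f j) : StrictMono f := by
  have key : ∀ v : ℕ, ∀ a c : Fin n, (a:ℕ) + v = (c:ℕ) → 0 < v → f a < f c := by
    intro v
    induction v with
    | zero => intro a c h0 h1; omega
    | succ v IH =>
      intro a c hsum _
      rcases Nat.eq_zero_or_pos v with rfl | hv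
      · exact h a c (by omega)
      · have hcn : (a:ℕ) + v < n := by have := c.isLt; omega
        have h1 : f a < f ⟨(a:ℕ) + v, hcn⟩ := IH a ⟨(a:ℕ) + v, hcn⟩ rfl hv
        have h2 : f ⟨(a:ℕ) + v, hcn⟩ < f c := h ⟨(a:ℕ) + v, hcn⟩ c (by show (a:ℕ) + v + 1 = (c:ℕ); omega)
        exact h1.trans h2
  intro a c hac
  rw [Fin.lt_def] at hac
  exact key ((c:ℕ) - (a:ℕ)) a c (by omega) (by omega)

lemma perm_strictMono_eq_one (σ : Perm (Fin n)) (h : StrictMono (σ : Fin n → Fin n)) :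
    σ = 1 := by
  have key : ∀ v : ℕ, ∀ k : Fin n, (k:ℕ) = v → σ k = k := by
    intro v
    induction v using Nat.strong_induction_on with
    | _ v IH =>
      intro k hk
      have hge1 : k ≤ σ k := by
        by_contra hlt
        push_neg at hlt
        have hval : ((σ k : Fin n) : ℕ) < v := by rw [← hk]; exact hlt
        have ha : σ (σ k) = σ k := IH _ hval (σ k) rfl
        exact absurd (σ.injective ha) (ne_of_lt hlt)
      have hge2 : k ≤ σ⁻¹ k := by
        by_contra hlt
        push_neg at hlt
        have hval : ((σ⁻¹ k : Fin n) : ℕ) < v := by rw [← hk]; exact hlt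
        have ha : σ (σ⁻¹ k) = σ⁻¹ k := IH _ hval (σ⁻¹ k) rfl
        rw [Equiv.Perm.apply_inv_self] at ha
        exact absurd ha.symm (ne_of_lt hlt)
      have h3 : σ k ≤ k := by
        have h4 := h.monotone hge2
        rwa [Equiv.Perm.apply_inv_self] at h4
      exact le_antisymm h3 hge1
  exact Equiv.ext fun k => key (k:ℕ) k rfl

lemma inv_pos_descent (σ : Perm (Fin n)) (hpos : 0 < Inv σ) :
    ∃ i j : Fin n, (i:ℕ)+1 = (j:ℕ) ∧ σ⁻¹ j < σ⁻¹ i := by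
  by_contra hno
  push_neg at hno
  have hadj : ∀ i j : Fin n, (i:ℕ)+1 = (j:ℕ) → σ⁻¹ i < σ⁻¹ j := by
    intro i j hij
    have hle := hno i j hij
    have hne : σ⁻¹ i ≠ σ⁻¹ j := by
      intro hc
      have : i = j := (σ⁻¹ : Perm (Fin n)).injective hc
      rw [this] at hij
      omega
    exact lt_of_le_of_ne hle hne
  have h1 : (σ⁻¹ : Perm (Fin n)) = 1 :=
    perm_strictMono_eq_one σ⁻¹ (strictMono_of_adj _ hadj)
  have hσ : σ = 1 := by
    have := congrArg (·⁻¹) h1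
    simpa using this
  rw [hσ, inv_one_perm] at hpos
  exact absurd hpos (lt_irrefl 0)

lemma sset_data {s : GLn ℂ n} (hs : s ∈ Sset ℂ n) :
    ∃ i j : Fin n, (i:ℕ)+1 = (j:ℕ) ∧ Mono s (Equiv.swap i j) ∧
      ∀ k l, Mat s k l = if Equiv.swap i j l = k then 1 else 0 := by
  obtain ⟨i, j, hij, hmat⟩ := hs
  have hmat' : ∀ k l, Mat s k l = if Equiv.swap i j l = k then 1 else 0 := hmat
  refine ⟨i, j, hij, fun k l => ?_, hmat'⟩
  rw [hmat' k l]
  by_cases h : Equiv.swap i j l = k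
  · simp [h]
  · simp [h]

lemma s_mem_whb {s : GLn ℂ n} (hs : s ∈ Sset ℂ n) : s ∈ WHbset ℂ n b := by
  obtain ⟨i, j, hij, hsm, hmat'⟩ := sset_data hs
  apply whb_of_mono hsm
  intro l
  rw [hmat' _ l, if_pos rfl, one_pow]

lemma s_mul_s {s : GLn ℂ n} (hs : s ∈ Sset ℂ n) : s * s = 1 := by
  obtain ⟨i, j, hij, hmat⟩ := hs
  have hmat' : ∀ k l, Mat s k l = if Equiv.swap i j l = k then 1 else 0 := hmat
  apply Units.ext
  have hP : Mat s = P (Equiv.swap i j) := by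
    ext k l
    rw [hmat' k l]
    rfl
  rw [Units.val_mul]
  show Mat s * Mat s = ((1 : GLn ℂ n) : Matrix (Fin n) (Fin n) ℂ)
  rw [hP, P_mul, Equiv.swap_mul_self, P_one, Units.val_one]

lemma len_s {s : GLn ℂ n} (hs : s ∈ Sset ℂ n) : len s = 1 := by
  obtain ⟨i, j, hij, hsm, _⟩ := sset_data hs
  rw [len_eq_inv hsm]
  rcases inv_swap_mul (1 : Perm (Fin n)) hij with ⟨_, h⟩ | ⟨hlt, _⟩
  · rw [mul_one] at h
    rw [h, inv_one_perm]
  · simp only [inv_one, Perm.one_apply] at hlt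
    rw [Fin.lt_def] at hlt
    omega

lemma len_s_mul (hb : 0 < b) {s x : GLn ℂ n} (hs : s ∈ Sset ℂ n)
    (hx : x ∈ WHbset ℂ n b) :
    (len (s * x) = len x + 1) ∨ (len x = len (s * x) + 1) := by
  obtain ⟨i, j, hij, hsm, _⟩ := sset_data hs
  obtain ⟨σ, hxm, _⟩ := mono_of_whb hb hx
  have hm := mono_mul hsm hxm
  rw [len_eq_inv hm, len_eq_inv hxm]
  rcases inv_swap_mul σ hij with ⟨_, h⟩ | ⟨_, h⟩
  · exact Or.inl h
  · exact Or.inr h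

lemma exists_descent (hb : 0 < b) {x : GLn ℂ n} (hx : x ∈ WHbset ℂ n b)
    (hpos : 0 < len x) :
    ∃ s : GLn ℂ n, s ∈ Sset ℂ n ∧ len x = len (s * x) + 1 := by
  obtain ⟨σ, hxm, _⟩ := mono_of_whb hb hx
  have hpos' : 0 < Inv σ := by rwa [len_eq_inv hxm] at hpos
  obtain ⟨i, j, hij, hdesc⟩ := inv_pos_descent σ hpos'
  refine ⟨wU (Equiv.swap i j), ⟨i, j, hij, fun k l => rfl⟩, ?_⟩
  have hm := mono_mul (mono_wU (Equiv.swap i j)) hxm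
  rw [len_eq_inv hxm, len_eq_inv hm]
  rcases inv_swap_mul σ hij with ⟨hlt, _⟩ | ⟨_, h⟩
  · exact absurd hdesc (asymm hlt)
  · exact h

lemma len_hb_mul (hb : 0 < b) {d x : GLn ℂ n} (hd : d ∈ Hbset ℂ n b)
    (hx : x ∈ WHbset ℂ n b) : len (d * x) = len x := by
  obtain ⟨σ, hxm, _⟩ := mono_of_whb hb hx
  have hm := mono_mul (mono_of_hb hb hd) hxm
  rw [one_mul] at hm
  rw [len_eq_inv hm, len_eq_inv hxm]

lemma len_mul_hb (hb : 0 < b) {d x : GLn ℂ n} (hd : d ∈ Hbset ℂ n b)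
    (hx : x ∈ WHbset ℂ n b) : len (x * d) = len x := by
  obtain ⟨σ, hxm, _⟩ := mono_of_whb hb hx
  have hm := mono_mul hxm (mono_of_hb hb hd)
  rw [mul_one] at hm
  rw [len_eq_inv hm, len_eq_inv hxm]

lemma len_inv_whb (hb : 0 < b) {x : GLn ℂ n} (hx : x ∈ WHbset ℂ n b) :
    len x⁻¹ = len x := by
  obtain ⟨σ, hxm, _⟩ := mono_of_whb hb hx
  rw [len_eq_inv (mono_inv hxm), len_eq_inv hxm, inv_inv_perm]

lemma one_mem_hb : (1 : GLn ℂ n) ∈ Hbset ℂ n b := by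
  constructor
  · intro i j hij
    show ((1 : GLn ℂ n) : Matrix (Fin n) (Fin n) ℂ) i j = 0
    rw [Units.val_one]
    exact Matrix.one_apply_ne hij
  · intro i
    show ((1 : GLn ℂ n) : Matrix (Fin n) (Fin n) ℂ) i i ^ b = 1
    rw [Units.val_one, Matrix.one_apply_eq, one_pow]

lemma xset_mem_hb {s d : GLn ℂ n} (hd : d ∈ Xset ℂ n b s) :
    d ∈ Hbset ℂ n b := by
  obtain ⟨k, l, α, hα, hkl, hsm, hdm⟩ := hd
  have hdm' : Mat d = hmat ℂ b k l α := hdm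
  constructor
  · intro i j hij
    show Mat d i j = 0
    rw [hdm']
    exact Matrix.diagonal_apply_ne _ hij
  · intro i
    show Mat d i i ^ b = 1
    rw [hdm']
    unfold hmat
    rw [Matrix.diagonal_apply_eq]
    by_cases h1 : i = k
    · rw [if_pos h1]
      exact hα
    rw [if_neg h1]
    by_cases h2 : i = l
    · rw [if_pos h2, mul_pow]
      have hev : ((-1:ℂ)^(b-1))^b = 1 := by
        rw [← pow_mul]
        apply Even.neg_one_pow
        rcases Nat.even_or_odd b with he | ho
        · exact he.mul_left _
        · have h3 : Even (b-1) := by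
            rcases ho with ⟨c, rfl⟩
            exact ⟨c, by omega⟩
          exact h3.mul_right _
      rw [hev, one_mul, inv_pow, hα, inv_one]
    · rw [if_neg h2, one_pow]

lemma xset_finite (hb : 0 < b) (s : GLn ℂ n) : (Xset ℂ n b s).Finite := by
  have hroots : Set.Finite {α : ℂ | α ^ b = 1} := by
    apply Set.Finite.subset (Polynomial.nthRoots b (1:ℂ)).toFinset.finite_toSet
    intro α hα
    rw [Finset.mem_coe, Multiset.mem_toFinset, Polynomial.mem_nthRoots hb]
    exact hα
  have hsub : Xset ℂ n b s ⊆ ⋃ k : Fin n, ⋃ l : Fin n, ⋃ α ∈ {α : ℂ | α ^ b = 1},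
      {d : GLn ℂ n | Mat d = hmat ℂ b k l α} := by
    rintro d ⟨k, l, α, hα, _, _, hdm⟩
    simp only [Set.mem_iUnion, Set.mem_setOf_eq]
    exact ⟨k, l, α, hα, hdm⟩
  apply Set.Finite.subset _ hsub
  apply Set.finite_iUnion
  intro k
  apply Set.finite_iUnion
  intro l
  apply Set.Finite.biUnion hroots
  intro α _
  apply Set.Subsingleton.finite
  intro d1 h1 d2 h2
  exact Units.ext (h1.trans h2.symm)

lemma eq_one_of_inv_zero (σ : Perm (Fin n)) (h : Inv σ = 0) : σ = 1 := by
  apply perm_strictMono_eq_one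
  intro a c hac
  have hset : {p : Fin n × Fin n | p.1 < p.2 ∧ σ p.2 < σ p.1} = ∅ := by
    rwa [← Set.ncard_eq_zero (Set.toFinite _)]
  by_contra hno
  push_neg at hno
  have hne : σ c ≠ σ a := fun hc => (ne_of_lt hac) (σ.injective hc.symm)
  have hmem : (a, c) ∈ {p : Fin n × Fin n | p.1 < p.2 ∧ σ p.2 < σ p.1} :=
    ⟨hac, lt_of_le_of_ne hno hne⟩
  rw [hset] at hmem
  exact hmem

lemma one_mem_whb (hb : 0 < b) : (1 : GLn ℂ n) ∈ WHbset ℂ n b :=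
  hb_mem_whb hb one_mem_hb

end KLaux2

namespace KLmain
set_option maxSynthPendingDepth 3
open KLaux KLaux2 LaurentPolynomial

/-- Bundled data for the Hecke algebra situation. -/
structure KL (n b : ℕ) (Ht : Type) [Ring Ht] [Algebra (Atil b) Ht] where
  hn : 0 < n
  hb : 0 < b
  TT : GLn ℂ n → Ht
  bt : Module.Basis ↥(WHbset ℂ n b) (Atil b) Ht
  hbt : ∀ x : ↥(WHbset ℂ n b), bt x = TT ↑x
  hT1 : TT 1 = 1
  hTd : ∀ d ∈ Hbset ℂ n b, ∀ x ∈ WHbset ℂ n b,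
    TT d * TT x = TT (d * x) ∧ TT x * TT d = TT (x * d)
  hTsL : ∀ s ∈ Sset ℂ n, ∀ x ∈ WHbset ℂ n b,
    (len x < len (s * x) → TT s * TT x = TT (s * x)) ∧
    (len (s * x) < len x →
      TT s * TT x = TT (s * x) + vbq b • ∑ᶠ d ∈ Xset ℂ n b s, TT (d * x))
  hTsR : ∀ s ∈ Sset ℂ n, ∀ x ∈ WHbset ℂ n b,
    (len x < len (x * s) → TT x * TT s = TT (x * s)) ∧
    (len (x * s) < len x →
      TT x * TT s = TT (x * s) + vbq b • ∑ᶠ d ∈ Xset ℂ n b s, TT (x * d))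
  barA : Atil b →+* Atil b
  hbarv : barA (LaurentPolynomial.T 1) = LaurentPolynomial.T (-1)
  hbarC : ∀ r : Zloc b, barA (LaurentPolynomial.C r) = LaurentPolynomial.C r
  barH : Ht → Ht
  hbarHadd : ∀ h h' : Ht, barH (h + h') = barH h + barH h'
  hbarHsmul : ∀ (c : Atil b) (h : Ht), barH (c • h) = barA c • barH h
  hbarHT : ∀ x ∈ WHbset ℂ n b, barH (TT x) * TT x⁻¹ = 1 ∧ TT x⁻¹ * barH (TT x) = 1

namespace KL

variable {n b : ℕ} {Ht : Type} [Ring Ht] [Algebra (Atil b) Ht] (D : KL n b Ht)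

lemma repr_TT (x : ↥(WHbset ℂ n b)) : D.bt.repr (D.TT ↑x) = Finsupp.single x 1 := by
  rw [← D.hbt]
  exact D.bt.repr_self x

lemma barA_eq (f : Atil b) : D.barA f = invert f :=
  KLaux.barA_eq_invert D.barA D.hbarv D.hbarC f

lemma barA_vbq : D.barA (vbq b) = -(vbq b) := by
  rw [D.barA_eq]
  unfold vbq
  rw [map_mul, invert_C, map_sub, invert_T, invert_T]
  ring

/-- `v⁻¹/b` -/
def vm (b : ℕ) : Atil b :=
  LaurentPolynomial.C (Localization.Away.invSelf (b : ℤ)) * LaurentPolynomial.T (-1)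

/-- `v/b` -/
def vp (b : ℕ) : Atil b :=
  LaurentPolynomial.C (Localization.Away.invSelf (b : ℤ)) * LaurentPolynomial.T 1

lemma vbq_eq : vbq b = vp b - vm b := by
  unfold vbq vp vm
  ring

lemma barA_vm : D.barA (vm b) = vp b := by
  rw [D.barA_eq]
  unfold vm vp
  rw [map_mul, invert_C, invert_T]
  norm_num

lemma vm_neg (k : ℤ) (hk : 0 ≤ k) : (vm b).coeff k = 0 := by
  unfold vm
  rw [KLaux.coeff_C_mul_T]
  rw [if_neg (by omega)]

lemma barH_zero : D.barH 0 = 0 := by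
  have h := D.hbarHadd 0 0
  rw [add_zero] at h
  have h2 := congrArg (fun t => t - D.barH 0) h
  simp only [sub_self, add_sub_cancel_right] at h2
  exact h2.symm

lemma barH_smul (c : Atil b) (h : Ht) : D.barH (c • h) = D.barA c • D.barH h :=
  D.hbarHsmul c h

lemma barH_neg (h : Ht) : D.barH (-h) = -D.barH h := by
  have h1 := D.hbarHsmul (-1 : Atil b) h
  rw [show ((-1 : Atil b) • h) = -h from neg_one_smul _ _, map_neg, map_one,
    show ((-1 : Atil b) • D.barH h) = -D.barH h from neg_one_smul _ _] at h1
  exact h1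

lemma barH_sub (h h' : Ht) : D.barH (h - h') = D.barH h - D.barH h' := by
  rw [sub_eq_add_neg, D.hbarHadd, D.barH_neg, sub_eq_add_neg]

lemma barH_sum {ι : Type} (F : Finset ι) (f : ι → Ht) :
    D.barH (∑ i ∈ F, f i) = ∑ i ∈ F, D.barH (f i) := by
  classical
  induction F using Finset.induction_on with
  | empty => simpa using D.barH_zero
  | insert _ _ hns ih =>
    rw [Finset.sum_insert hns, Finset.sum_insert hns, D.hbarHadd, ih]

lemma expand (h : Ht) :
    h = ∑ z ∈ (D.bt.repr h).support, (D.bt.repr h z) • D.TT ↑z := by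
  conv_lhs => rw [← D.bt.linearCombination_repr h]
  rw [Finsupp.linearCombination_apply, Finsupp.sum]
  exact Finset.sum_congr rfl fun z _ => by rw [D.hbt]

lemma barH_expand (h : Ht) :
    D.barH h = ∑ z ∈ (D.bt.repr h).support,
      (D.barA (D.bt.repr h z)) • D.barH (D.TT ↑z) := by
  conv_lhs => rw [D.expand h]
  rw [D.barH_sum]
  exact Finset.sum_congr rfl fun z _ => D.hbarHsmul _ _

/-- sum of `TT d` over `X_s` as a Finset sum -/
def xsum (s : GLn ℂ n) : Ht :=
  ∑ d ∈ (xset_finite D.hb s).toFinset, D.TT d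

lemma finsum_xset (s : GLn ℂ n) (f : GLn ℂ n → Ht) :
    ∑ᶠ d ∈ Xset ℂ n b s, f d = ∑ d ∈ (xset_finite D.hb s).toFinset, f d := by
  have h := finsum_mem_coe_finset (s := (xset_finite D.hb s).toFinset) (f := f)
  simp only [Set.Finite.coe_toFinset] at h
  exact h

lemma TT_mul_inv_hb {d : GLn ℂ n} (hd : d ∈ Hbset ℂ n b) :
    D.TT d * D.TT d⁻¹ = 1 ∧ D.TT d⁻¹ * D.TT d = 1 := by
  constructor
  · rw [(D.hTd d hd d⁻¹ (hb_mem_whb D.hb (hb_inv_mem D.hb hd))).1, mul_inv_cancel, D.hT1]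
  · rw [(D.hTd d⁻¹ (hb_inv_mem D.hb hd) d (hb_mem_whb D.hb hd)).1, inv_mul_cancel, D.hT1]

lemma inv_unique {a u v : Ht} (h1 : u * a = 1) (h2 : a * v = 1) : u = v := by
  calc u = u * (a * v) := by rw [h2, mul_one]
  _ = (u * a) * v := by rw [mul_assoc]
  _ = v := by rw [h1, one_mul]

lemma barH_TT_hb {d : GLn ℂ n} (hd : d ∈ Hbset ℂ n b) : D.barH (D.TT d) = D.TT d := by
  have h1 := (D.hbarHT d (hb_mem_whb D.hb hd)).1
  have h2 := (D.TT_mul_inv_hb hd).2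
  exact inv_unique h1 h2

end KL
end KLmain

namespace KLmain
namespace KL
set_option maxSynthPendingDepth 3
open KLaux KLaux2 LaurentPolynomial

variable {n b : ℕ} {Ht : Type} [Ring Ht] [Algebra (Atil b) Ht] (D : KL n b Ht)

lemma len_one_gl : len (1 : GLn ℂ n) = 0 :=
  len_of_hb (b := 1) one_pos one_mem_hb

lemma mem_toFinset_hb {s d : GLn ℂ n} (hd : d ∈ (xset_finite D.hb s).toFinset) :
    d ∈ Hbset ℂ n b :=
  xset_mem_hb ((Set.Finite.mem_toFinset _).mp hd)

lemma Ts_sq_L {s : GLn ℂ n} (hs : s ∈ Sset ℂ n) :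
    D.TT s * D.TT s = 1 + vbq b • (D.xsum s * D.TT s) := by
  have hsw : s ∈ WHbset ℂ n b := s_mem_whb hs
  have hss := s_mul_s hs
  have hlen : len (s * s) < len s := by
    rw [hss, len_one_gl, len_s hs]
    omega
  have h := (D.hTsL s hs s hsw).2 hlen
  rw [hss, D.hT1, D.finsum_xset] at h
  have hsum : ∑ d ∈ (xset_finite D.hb s).toFinset, D.TT (d * s) = D.xsum s * D.TT s := by
    unfold xsum
    rw [Finset.sum_mul]
    apply Finset.sum_congr rfl
    intro d hd
    exact ((D.hTd d (D.mem_toFinset_hb hd) s hsw).1).symm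
  rw [h, hsum]

lemma Ts_sq_R {s : GLn ℂ n} (hs : s ∈ Sset ℂ n) :
    D.TT s * D.TT s = 1 + vbq b • (D.TT s * D.xsum s) := by
  have hsw : s ∈ WHbset ℂ n b := s_mem_whb hs
  have hss := s_mul_s hs
  have hlen : len (s * s) < len s := by
    rw [hss, len_one_gl, len_s hs]
    omega
  have h := (D.hTsR s hs s hsw).2 hlen
  rw [hss, D.hT1, D.finsum_xset] at h
  have hsum : ∑ d ∈ (xset_finite D.hb s).toFinset, D.TT (s * d) = D.TT s * D.xsum s := by
    unfold xsum
    rw [Finset.mul_sum]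
    apply Finset.sum_congr rfl
    intro d hd
    exact ((D.hTd d (D.mem_toFinset_hb hd) s hsw).2).symm
  rw [h, hsum]

/-- the inverse of `T_s`, which equals the bar of `T_s`. -/
def Js (s : GLn ℂ n) : Ht := D.TT s - vbq b • D.xsum s

lemma Js_mul_Ts {s : GLn ℂ n} (hs : s ∈ Sset ℂ n) : D.Js s * D.TT s = 1 := by
  unfold Js
  rw [sub_mul, smul_mul_assoc, D.Ts_sq_L hs]
  exact add_sub_cancel_right 1 _

lemma Ts_mul_Js {s : GLn ℂ n} (hs : s ∈ Sset ℂ n) : D.TT s * D.Js s = 1 := by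
  unfold Js
  rw [mul_sub, mul_smul_comm, D.Ts_sq_R hs]
  exact add_sub_cancel_right 1 _

lemma s_inv {s : GLn ℂ n} (hs : s ∈ Sset ℂ n) : s⁻¹ = s :=
  inv_eq_of_mul_eq_one_right (s_mul_s hs)

lemma barH_TT_s {s : GLn ℂ n} (hs : s ∈ Sset ℂ n) : D.barH (D.TT s) = D.Js s := by
  have h1 := (D.hbarHT s (s_mem_whb hs)).1
  rw [s_inv hs] at h1
  exact inv_unique h1 (D.Ts_mul_Js hs)

lemma barH_TT_eq {x : GLn ℂ n} {u : Ht} (hx : x ∈ WHbset ℂ n b)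
    (h1 : D.TT x⁻¹ * u = 1) : D.barH (D.TT x) = u :=
  inv_unique (D.hbarHT x hx).1 h1

lemma barH_TT_hb_mul {d x : GLn ℂ n} (hd : d ∈ Hbset ℂ n b) (hx : x ∈ WHbset ℂ n b) :
    D.barH (D.TT (d * x)) = D.TT d * D.barH (D.TT x) := by
  have hxi : x⁻¹ ∈ WHbset ℂ n b := whb_inv D.hb hx
  have hdx : d * x ∈ WHbset ℂ n b := whb_mul D.hb (hb_mem_whb D.hb hd) hx
  apply D.barH_TT_eq hdx
  have hTrev : D.TT ((d * x)⁻¹) = D.TT x⁻¹ * D.TT d⁻¹ := by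
    rw [mul_inv_rev]
    exact ((D.hTd d⁻¹ (hb_inv_mem D.hb hd) x⁻¹ hxi).2).symm
  rw [hTrev, mul_assoc, ← mul_assoc (D.TT d⁻¹), (D.TT_mul_inv_hb hd).2, one_mul]
  exact (D.hbarHT x hx).2

lemma barH_TT_s_mul {s x : GLn ℂ n} (hs : s ∈ Sset ℂ n) (hx : x ∈ WHbset ℂ n b)
    (hlen : len x < len (s * x)) :
    D.barH (D.TT (s * x)) = D.Js s * D.barH (D.TT x) := by
  have hsw : s ∈ WHbset ℂ n b := s_mem_whb hs
  have hxi : x⁻¹ ∈ WHbset ℂ n b := whb_inv D.hb hx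
  have hsx : s * x ∈ WHbset ℂ n b := whb_mul D.hb hsw hx
  have hrev : (s * x)⁻¹ = x⁻¹ * s := by rw [mul_inv_rev, s_inv hs]
  have hlen2 : len x⁻¹ < len (x⁻¹ * s) := by
    rw [len_inv_whb D.hb hx]
    have h3 : x⁻¹ * s = (s * x)⁻¹ := hrev.symm
    rw [h3, len_inv_whb D.hb hsx]
    exact hlen
  have hTrev : D.TT ((s * x)⁻¹) = D.TT x⁻¹ * D.TT s := by
    rw [hrev]
    exact ((D.hTsR s hs x⁻¹ hxi).1 hlen2).symm
  apply D.barH_TT_eq hsx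
  rw [hTrev, mul_assoc, ← mul_assoc (D.TT s), D.Ts_mul_Js hs, one_mul]
  exact (D.hbarHT x hx).2

lemma barH_Ts_TT {s x : GLn ℂ n} (hs : s ∈ Sset ℂ n) (hx : x ∈ WHbset ℂ n b) :
    D.barH (D.TT s * D.TT x) = D.Js s * D.barH (D.TT x) := by
  rcases len_s_mul D.hb hs hx with hup | hdown
  · rw [(D.hTsL s hs x hx).1 (by omega)]
    exact D.barH_TT_s_mul hs hx (by omega)
  · have hyw : s * x ∈ WHbset ℂ n b := whb_mul D.hb (s_mem_whb hs) hx
    have hxy : x = s * (s * x) := by rw [← mul_assoc, s_mul_s hs, one_mul]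
    have hlen : len (s * x) < len x := by omega
    have hq := (D.hTsL s hs x hx).2 hlen
    rw [D.finsum_xset] at hq
    have hbar : D.barH (D.TT s * D.TT x)
        = D.barH (D.TT (s * x)) + (-(vbq b)) • ∑ d ∈ (xset_finite D.hb s).toFinset,
            D.TT d * D.barH (D.TT x) := by
      rw [hq, D.hbarHadd, D.hbarHsmul, D.barH_sum, D.barA_vbq]
      congr 1
      congr 1
      apply Finset.sum_congr rfl
      intro d hd
      exact D.barH_TT_hb_mul (D.mem_toFinset_hb hd) hx
    have hBy : D.barH (D.TT x) = D.Js s * D.barH (D.TT (s * x)) := by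
      conv_lhs => rw [hxy]
      apply D.barH_TT_s_mul hs hyw
      rw [← hxy]
      omega
    have hTsB : D.TT s * D.barH (D.TT x) = D.barH (D.TT (s * x)) := by
      rw [hBy, ← mul_assoc, D.Ts_mul_Js hs, one_mul]
    have hxsB : D.xsum s * D.barH (D.TT x)
        = ∑ d ∈ (xset_finite D.hb s).toFinset, D.TT d * D.barH (D.TT x) := by
      unfold xsum
      rw [Finset.sum_mul]
    rw [hbar]
    show _ = (D.TT s - vbq b • D.xsum s) * D.barH (D.TT x)
    rw [sub_mul, smul_mul_assoc, hTsB, hxsB, neg_smul, sub_eq_add_neg]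

lemma barH_Ts_mul {s : GLn ℂ n} (hs : s ∈ Sset ℂ n) (h : Ht) :
    D.barH (D.TT s * h) = D.Js s * D.barH h := by
  conv_lhs => rw [D.expand h]
  rw [Finset.mul_sum]
  have h1 : ∀ z ∈ (D.bt.repr h).support,
      D.TT s * ((D.bt.repr h z) • D.TT ↑z) = (D.bt.repr h z) • (D.TT s * D.TT ↑z) :=
    fun z _ => mul_smul_comm _ _ _
  rw [Finset.sum_congr rfl h1, D.barH_sum]
  have h2 : ∀ z ∈ (D.bt.repr h).support,
      D.barH ((D.bt.repr h z) • (D.TT s * D.TT ↑z))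
        = (D.barA (D.bt.repr h z)) • (D.Js s * D.barH (D.TT ↑z)) := by
    intro z _
    rw [D.hbarHsmul, D.barH_Ts_TT hs z.2]
  rw [Finset.sum_congr rfl h2, D.barH_expand h, Finset.mul_sum]
  apply Finset.sum_congr rfl
  intro z _
  rw [mul_smul_comm]

lemma barH_Td_mul {d : GLn ℂ n} (hd : d ∈ Hbset ℂ n b) (h : Ht) :
    D.barH (D.TT d * h) = D.TT d * D.barH h := by
  conv_lhs => rw [D.expand h]
  rw [Finset.mul_sum]
  have h1 : ∀ z ∈ (D.bt.repr h).support,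
      D.TT d * ((D.bt.repr h z) • D.TT ↑z) = (D.bt.repr h z) • (D.TT d * D.TT ↑z) :=
    fun z _ => mul_smul_comm _ _ _
  rw [Finset.sum_congr rfl h1, D.barH_sum]
  have h2 : ∀ z ∈ (D.bt.repr h).support,
      D.barH ((D.bt.repr h z) • (D.TT d * D.TT ↑z))
        = (D.barA (D.bt.repr h z)) • (D.TT d * D.barH (D.TT ↑z)) := by
    intro z _
    rw [D.hbarHsmul, (D.hTd d hd ↑z z.2).1, D.barH_TT_hb_mul hd z.2]
  rw [Finset.sum_congr rfl h2, D.barH_expand h, Finset.mul_sum]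
  apply Finset.sum_congr rfl
  intro z _
  rw [mul_smul_comm]

end KL
end KLmain

namespace KLmain
namespace KL
set_option maxSynthPendingDepth 3
open KLaux KLaux2 LaurentPolynomial

variable {n b : ℕ} {Ht : Type} [Ring Ht] [Algebra (Atil b) Ht] (D : KL n b Ht)

/-- all basis coordinates of `h` vanish in lengths `≥ m` -/
def SuppLt (m : ℕ) (h : Ht) : Prop :=
  ∀ z : ↥(WHbset ℂ n b), m ≤ len (z : GLn ℂ n) → D.bt.repr h z = 0

lemma suppLt_zero (m : ℕ) : D.SuppLt m 0 := by
  intro z _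
  rw [map_zero]
  rfl

lemma suppLt_mono {m m' : ℕ} (hmm : m ≤ m') {h : Ht} (hh : D.SuppLt m h) :
    D.SuppLt m' h := fun z hz => hh z (le_trans hmm hz)

lemma suppLt_add {m : ℕ} {h h' : Ht} (hh : D.SuppLt m h) (hh' : D.SuppLt m h') :
    D.SuppLt m (h + h') := by
  intro z hz
  rw [map_add, Finsupp.add_apply, hh z hz, hh' z hz, add_zero]

lemma suppLt_sub {m : ℕ} {h h' : Ht} (hh : D.SuppLt m h) (hh' : D.SuppLt m h') :
    D.SuppLt m (h - h') := by
  intro z hz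
  rw [map_sub, Finsupp.sub_apply, hh z hz, hh' z hz, sub_zero]

lemma suppLt_smul {m : ℕ} (c : Atil b) {h : Ht} (hh : D.SuppLt m h) :
    D.SuppLt m (c • h) := by
  intro z hz
  rw [map_smul, Finsupp.smul_apply, hh z hz, smul_zero]

lemma suppLt_sum {ι : Type} {m : ℕ} (F : Finset ι) (f : ι → Ht)
    (hf : ∀ i ∈ F, D.SuppLt m (f i)) : D.SuppLt m (∑ i ∈ F, f i) := by
  classical
  induction F using Finset.induction_on with
  | empty => simpa using D.suppLt_zero m
  | @insert a F' hns ih =>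
    rw [Finset.sum_insert hns]
    exact D.suppLt_add (hf a (Finset.mem_insert_self a F'))
      (ih fun i hi => hf i (Finset.mem_insert_of_mem hi))

lemma suppLt_TT {x : GLn ℂ n} (hx : x ∈ WHbset ℂ n b) {m : ℕ} (hlt : len x < m) :
    D.SuppLt m (D.TT x) := by
  intro z hz
  have hr := D.repr_TT ⟨x, hx⟩
  rw [show D.bt.repr (D.TT x) = Finsupp.single ⟨x, hx⟩ 1 from hr, Finsupp.single_apply,
    if_neg]
  intro hc
  rw [← hc] at hz
  have hz' : m ≤ len x := hz
  omega

lemma suppLt_s_mul {s : GLn ℂ n} (hs : s ∈ Sset ℂ n) {m : ℕ} {h : Ht}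
    (hh : D.SuppLt m h) : D.SuppLt (m + 1) (D.TT s * h) := by
  intro z hz
  conv_lhs => rw [D.expand h, Finset.mul_sum]
  rw [map_sum, Finset.sum_apply']
  apply Finset.sum_eq_zero
  intro w _
  rw [mul_smul_comm, map_smul, Finsupp.smul_apply]
  rcases eq_or_ne (D.bt.repr h w) 0 with h0 | h0
  · rw [h0, zero_smul]
  have hwlen : len (w : GLn ℂ n) < m := by
    by_contra hc
    exact h0 (hh w (by omega))
  have hzw : ∀ u : GLn ℂ n, u ∈ WHbset ℂ n b → len u < m + 1 →
      D.bt.repr (D.TT u) z = 0 := by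
    intro u hu hlu
    exact D.suppLt_TT hu hlu z hz
  rcases len_s_mul D.hb hs w.2 with hup | hdown
  · rw [(D.hTsL s hs ↑w w.2).1 (by omega)]
    rw [hzw _ (whb_mul D.hb (s_mem_whb hs) w.2) (by omega), smul_zero]
  · rw [(D.hTsL s hs ↑w w.2).2 (by omega), D.finsum_xset]
    rw [map_add, Finsupp.add_apply, hzw _ (whb_mul D.hb (s_mem_whb hs) w.2) (by omega)]
    rw [map_smul, Finsupp.smul_apply, map_sum, Finset.sum_apply']
    have hsum0 : ∑ d ∈ (xset_finite D.hb s).toFinset, (D.bt.repr (D.TT (d * ↑w))) z = 0 := by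
      apply Finset.sum_eq_zero
      intro d hd
      have hdHb := D.mem_toFinset_hb hd
      apply hzw _ (whb_mul D.hb (hb_mem_whb D.hb hdHb) w.2)
      rw [len_hb_mul D.hb hdHb w.2]
      omega
    rw [hsum0, smul_zero, add_zero, smul_zero]

lemma suppLt_hb_mul {d : GLn ℂ n} (hd : d ∈ Hbset ℂ n b) {m : ℕ} {h : Ht}
    (hh : D.SuppLt m h) : D.SuppLt m (D.TT d * h) := by
  intro z hz
  conv_lhs => rw [D.expand h, Finset.mul_sum]
  rw [map_sum, Finset.sum_apply']
  apply Finset.sum_eq_zero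
  intro w _
  rw [mul_smul_comm, map_smul, Finsupp.smul_apply]
  rcases eq_or_ne (D.bt.repr h w) 0 with h0 | h0
  · rw [h0, zero_smul]
  have hwlen : len (w : GLn ℂ n) < m := by
    by_contra hc
    exact h0 (hh w (by omega))
  rw [(D.hTd d hd ↑w w.2).1]
  have hlen : len (d * (↑w : GLn ℂ n)) < m := by
    rw [len_hb_mul D.hb hd w.2]
    omega
  rw [D.suppLt_TT (whb_mul D.hb (hb_mem_whb D.hb hd) w.2) hlen z hz, smul_zero]

lemma hb_of_whb_len_zero (hb0 : 0 < b) {x : GLn ℂ n} (hx : x ∈ WHbset ℂ n b)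
    (hl : len x = 0) : x ∈ Hbset ℂ n b := by
  obtain ⟨σ, hm, _⟩ := mono_of_whb hb0 hx
  have h1 : Inv σ = 0 := by rwa [len_eq_inv hm] at hl
  exact hb_of_mono_one hb0 hx hm (eq_one_of_inv_zero σ h1)

/-- triangularity of the bar involution -/
lemma bar_triangular : ∀ (N : ℕ) (x : GLn ℂ n), x ∈ WHbset ℂ n b → len x = N →
    D.SuppLt N (D.barH (D.TT x) - D.TT x) := by
  intro N
  induction N using Nat.strong_induction_on with
  | _ N IH =>
    intro x hx hlx
    rcases Nat.eq_zero_or_pos N with rfl | hN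
    · have hhb := hb_of_whb_len_zero D.hb hx hlx
      rw [D.barH_TT_hb hhb, sub_self]
      exact D.suppLt_zero 0
    · obtain ⟨s, hs, hdesc⟩ := exists_descent D.hb hx (by omega)
      set y := s * x with hy
      have hyw : y ∈ WHbset ℂ n b := whb_mul D.hb (s_mem_whb hs) hx
      have hxy : x = s * y := by rw [hy, ← mul_assoc, s_mul_s hs, one_mul]
      have hylen : len y = N - 1 := by omega
      have hE := IH (len y) (by omega) y hyw rfl
      have hTx : D.TT s * D.TT y = D.TT x := by
        rw [(D.hTsL s hs y hyw).1 (by rw [← hxy]; omega), ← hxy]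
      have hbarx : D.barH (D.TT x) = D.Js s * D.barH (D.TT y) := by
        rw [← hTx, D.barH_Ts_mul hs]
      set E := D.barH (D.TT y) - D.TT y with hEdef
      have hBy : D.barH (D.TT y) = D.TT y + E := by rw [hEdef]; abel
      have hexp : D.barH (D.TT x) - D.TT x
          = D.TT s * E - vbq b • (D.xsum s * D.TT y) - vbq b • (D.xsum s * E) := by
        rw [hbarx, hBy]
        show (D.TT s - vbq b • D.xsum s) * (D.TT y + E) - D.TT x = _
        rw [sub_mul, mul_add, mul_add, hTx, smul_mul_assoc, smul_mul_assoc]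
        abel
      rw [hexp]
      apply D.suppLt_sub
      apply D.suppLt_sub
      · have h1 : D.SuppLt (len y + 1) (D.TT s * E) := D.suppLt_s_mul hs hE
        exact D.suppLt_mono (by omega) h1
      · apply D.suppLt_smul
        have hxs : D.xsum s * D.TT y = ∑ d ∈ (xset_finite D.hb s).toFinset, D.TT d * D.TT y := by
          unfold xsum
          rw [Finset.sum_mul]
        rw [hxs]
        apply D.suppLt_sum
        intro d hd
        have hdHb := D.mem_toFinset_hb hd
        rw [(D.hTd d hdHb y hyw).1]
        apply D.suppLt_TT (whb_mul D.hb (hb_mem_whb D.hb hdHb) hyw)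
        rw [len_hb_mul D.hb hdHb hyw]
        omega
      · apply D.suppLt_smul
        have hxs : D.xsum s * E = ∑ d ∈ (xset_finite D.hb s).toFinset, D.TT d * E := by
          unfold xsum
          rw [Finset.sum_mul]
        rw [hxs]
        apply D.suppLt_sum
        intro d hd
        have hdHb := D.mem_toFinset_hb hd
        exact D.suppLt_mono (by omega) (D.suppLt_hb_mul hdHb hE)

/-- all basis coordinates lie in `Ã_{<0}` (coefficientwise form) -/
def NegC (h : Ht) : Prop :=
  ∀ z : ↥(WHbset ℂ n b), ∀ k : ℤ, 0 ≤ k → (D.bt.repr h z).coeff k = 0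

lemma eq_zero_of_barfix {h : Ht} (hbar : D.barH h = h) (hneg : D.NegC h) : h = 0 := by
  by_contra hne
  have hr : D.bt.repr h ≠ 0 := by
    intro hc
    apply hne
    have := congrArg (D.bt.repr.symm) hc
    rwa [LinearEquiv.symm_apply_apply, map_zero] at this
  obtain ⟨x, hxS, hmax⟩ := Finset.exists_max_image (D.bt.repr h).support
    (fun z => len (z : GLn ℂ n)) (Finsupp.support_nonempty_iff.mpr hr)
  have hc0 : D.bt.repr h x ≠ 0 := Finsupp.mem_support_iff.mp hxS
  have hkey : D.bt.repr h x = D.barA (D.bt.repr h x) := by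
    conv_lhs => rw [← hbar, D.barH_expand h]
    rw [map_sum, Finset.sum_apply']
    have hterm : ∀ z ∈ (D.bt.repr h).support,
        (D.bt.repr ((D.barA (D.bt.repr h z)) • D.barH (D.TT ↑z))) x
          = D.barA (D.bt.repr h z) * (if z = x then 1 else 0) := by
      intro z hz
      rw [map_smul, Finsupp.smul_apply, smul_eq_mul]
      congr 1
      have hsplit : D.barH (D.TT ↑z) = D.TT ↑z + (D.barH (D.TT ↑z) - D.TT ↑z) := by abel
      rw [hsplit, map_add, Finsupp.add_apply]
      have hE := D.bar_triangular (len (z : GLn ℂ n)) ↑z z.2 rfl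
      rw [hE x (hmax z hz), add_zero]
      rw [show D.bt.repr (D.TT ↑z) = Finsupp.single z 1 from D.repr_TT z,
        Finsupp.single_apply]
    rw [Finset.sum_congr rfl hterm]
    simp only [mul_ite, mul_one, mul_zero]
    rw [Finset.sum_ite_eq' (D.bt.repr h).support x (fun z => D.barA (D.bt.repr h z))]
    rw [if_pos hxS]
  have hfix : invert (D.bt.repr h x) = D.bt.repr h x := by
    conv_rhs => rw [hkey, D.barA_eq]
  exact hc0 (KLaux.eq_zero_of_invert_eq _ hfix (fun k hk => hneg x k hk))

end KL
end KLmain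

namespace KLmain
namespace KL
set_option maxSynthPendingDepth 3
open KLaux KLaux2 LaurentPolynomial

variable {n b : ℕ} {Ht : Type} [Ring Ht] [Algebra (Atil b) Ht] (D : KL n b Ht)

theorem exists_good : ∀ (N : ℕ) (y : ↥(WHbset ℂ n b)), len (y : GLn ℂ n) = N →
    ∃ C : Ht, D.barH C = C ∧ D.SuppLt N (C - D.TT ↑y) ∧ D.NegC (C - D.TT ↑y) := by
  intro N
  induction N using Nat.strong_induction_on with
  | _ N IH =>
    intro y hlN
    rcases Nat.eq_zero_or_pos N with rfl | hN
    · refine ⟨D.TT ↑y, D.barH_TT_hb (hb_of_whb_len_zero D.hb y.2 hlN), ?_, ?_⟩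
      · rw [sub_self]
        exact D.suppLt_zero 0
      · rw [sub_self]
        intro z k hk
        rw [map_zero]
        rfl
    · classical
      have hCC : ∀ z : ↥(WHbset ℂ n b), len (z : GLn ℂ n) < N →
          ∃ C : Ht, D.barH C = C ∧ D.SuppLt (len (z : GLn ℂ n)) (C - D.TT ↑z) ∧
            D.NegC (C - D.TT ↑z) :=
        fun z hz => IH _ hz z rfl
      set CC : ↥(WHbset ℂ n b) → Ht := fun z =>
        if hz : len (z : GLn ℂ n) < N then Classical.choose (hCC z hz) else 0 with hCCdef
      have hCCspec : ∀ z : ↥(WHbset ℂ n b), ∀ (hz : len (z : GLn ℂ n) < N),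
          D.barH (CC z) = CC z ∧ D.SuppLt (len (z : GLn ℂ n)) (CC z - D.TT ↑z) ∧
            D.NegC (CC z - D.TT ↑z) := by
        intro z hz
        rw [hCCdef]
        simp only [dif_pos hz]
        exact Classical.choose_spec (hCC z hz)
      have hreprCC : ∀ z : ↥(WHbset ℂ n b), len (z : GLn ℂ n) < N →
          ∀ w : ↥(WHbset ℂ n b), D.bt.repr (CC z) w
            = (if z = w then 1 else 0) + D.bt.repr (CC z - D.TT ↑z) w := by
        intro z hz w
        have hsp : CC z = D.TT ↑z + (CC z - D.TT ↑z) := by abel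
        conv_lhs => rw [hsp]
        rw [map_add, Finsupp.add_apply,
          show D.bt.repr (D.TT ↑z) = Finsupp.single z 1 from D.repr_TT z,
          Finsupp.single_apply]
      have hCCsuppN : ∀ z : ↥(WHbset ℂ n b), len (z : GLn ℂ n) < N →
          D.SuppLt N (CC z) := by
        intro z hz w hw
        have hzw : z ≠ w := by
          intro hc
          rw [hc] at hz
          omega
        rw [hreprCC z hz w, if_neg hzw, zero_add]
        exact (hCCspec z hz).2.1 w (by omega)
      obtain ⟨s, hs, hdesc⟩ := exists_descent D.hb y.2 (by omega)
      set yy := (y : GLn ℂ n) with hyydef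
      set y' : GLn ℂ n := s * yy with hy'
      have hy'w : y' ∈ WHbset ℂ n b := whb_mul D.hb (s_mem_whb hs) y.2
      have hyy : yy = s * y' := by rw [hy', ← mul_assoc, s_mul_s hs, one_mul]
      obtain ⟨C', hC'bar, hC'supp, hC'neg⟩ := IH (len y') (by omega) ⟨y', hy'w⟩ rfl
      have hC'supp' : D.SuppLt (len y') (C' - D.TT y') := hC'supp
      set E := D.TT s * C' + vm b • (D.xsum s * C') with hEdef
      have hxsC : D.xsum s * C' = ∑ d ∈ (xset_finite D.hb s).toFinset, D.TT d * C' := by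
        unfold xsum
        rw [Finset.sum_mul]
      have hEbar : D.barH E = E := by
        rw [hEdef, D.hbarHadd, D.barH_Ts_mul hs, hC'bar, D.hbarHsmul, D.barA_vm]
        rw [hxsC, D.barH_sum]
        have hterms : ∀ d ∈ (xset_finite D.hb s).toFinset,
            D.barH (D.TT d * C') = D.TT d * C' := by
          intro d hd
          rw [D.barH_Td_mul (D.mem_toFinset_hb hd), hC'bar]
        rw [Finset.sum_congr rfl hterms, ← hxsC]
        show (D.TT s - vbq b • D.xsum s) * C' + vp b • (D.xsum s * C')
          = D.TT s * C' + vm b • (D.xsum s * C')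
        rw [sub_mul, smul_mul_assoc, vbq_eq, sub_smul]
        abel
      have hTy : D.TT s * D.TT y' = D.TT yy := by
        rw [(D.hTsL s hs y' hy'w).1 (by rw [← hyy]; omega), ← hyy]
      have hEsupp : D.SuppLt N (E - D.TT yy) := by
        have hsplit : E - D.TT yy
            = D.TT s * (C' - D.TT y') + vm b • (D.xsum s * C') := by
          rw [hEdef, mul_sub, hTy]
          abel
        rw [hsplit]
        apply D.suppLt_add
        · have h5 := D.suppLt_s_mul hs hC'supp'
          exact D.suppLt_mono (by omega) h5
        · apply D.suppLt_smul
          rw [hxsC]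
          apply D.suppLt_sum
          intro d hd
          have hdHb := D.mem_toFinset_hb hd
          have hsplit2 : D.TT d * C' = D.TT d * D.TT y' + D.TT d * (C' - D.TT y') := by
            rw [← mul_add]
            congr 1
            abel
          rw [hsplit2]
          apply D.suppLt_add
          · rw [(D.hTd d hdHb y' hy'w).1]
            apply D.suppLt_TT (whb_mul D.hb (hb_mem_whb D.hb hdHb) hy'w)
            rw [len_hb_mul D.hb hdHb hy'w]
            omega
          · exact D.suppLt_hb_mul hdHb (D.suppLt_mono (by omega) hC'supp')
      have hcorr : ∀ (k : ℕ) (E2 : Ht), D.barH E2 = E2 → D.SuppLt N (E2 - D.TT yy) →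
          (∀ z : ↥(WHbset ℂ n b),
            ¬ (∀ kk : ℤ, 0 ≤ kk → (D.bt.repr (E2 - D.TT yy) z).coeff kk = 0) →
            len (z : GLn ℂ n) < k) →
          ∃ C : Ht, D.barH C = C ∧ D.SuppLt N (C - D.TT yy) ∧ D.NegC (C - D.TT yy) := by
        intro k
        induction k with
        | zero =>
          intro E2 hbar hsupp hbad
          refine ⟨E2, hbar, hsupp, ?_⟩
          intro z kk hkk
          by_contra hc
          have h6 := hbad z (fun hall => hc (hall kk hkk))
          omega
        | succ k IHk =>
          intro E2 hbar hsupp hbad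
          set a : ↥(WHbset ℂ n b) → Atil b := fun z => D.bt.repr (E2 - D.TT yy) z with hadef
          set F : Finset ↥(WHbset ℂ n b) := (D.bt.repr (E2 - D.TT yy)).support.filter
            (fun z => len (z : GLn ℂ n) = k ∧ ¬ (∀ kk : ℤ, 0 ≤ kk → (a z).coeff kk = 0)) with hFdef
          have hFlt : ∀ z ∈ F, len (z : GLn ℂ n) < N := by
            intro z hz
            rw [hFdef] at hz
            have hz1 := (Finset.mem_filter.mp hz).1
            by_contra hc
            exact (Finsupp.mem_support_iff.mp hz1) (hsupp z (by omega))
          have hFk : ∀ z ∈ F, len (z : GLn ℂ n) = k := by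
            intro z hz
            rw [hFdef] at hz
            exact ((Finset.mem_filter.mp hz).2).1
          set E3 : Ht := E2 - ∑ z ∈ F, KLaux.rho (a z) • CC z with hE3def
          have hE3bar : D.barH E3 = E3 := by
            rw [hE3def, D.barH_sub, hbar, D.barH_sum]
            congr 1
            apply Finset.sum_congr rfl
            intro z hz
            rw [D.hbarHsmul, (hCCspec z (hFlt z hz)).1]
            congr 1
            rw [D.barA_eq]
            exact KLaux.invert_rho _
          have hsplitE3 : E3 - D.TT yy = (E2 - D.TT yy) - ∑ z ∈ F, KLaux.rho (a z) • CC z := by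
            rw [hE3def]
            abel
          have hE3supp : D.SuppLt N (E3 - D.TT yy) := by
            rw [hsplitE3]
            apply D.suppLt_sub hsupp
            apply D.suppLt_sum
            intro z hz
            exact D.suppLt_smul _ (hCCsuppN z (hFlt z hz))
          have hE3bad : ∀ z : ↥(WHbset ℂ n b),
              ¬ (∀ kk : ℤ, 0 ≤ kk → (D.bt.repr (E3 - D.TT yy) z).coeff kk = 0) →
              len (z : GLn ℂ n) < k := by
            intro w hwbad
            by_contra hc
            push_neg at hc
            apply hwbad
            intro kk hkk
            have hval : D.bt.repr (E3 - D.TT yy) w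
                = a w - (if w ∈ F then KLaux.rho (a w) else 0) := by
              rw [hsplitE3, map_sub, Finsupp.sub_apply]
              congr 1
              rw [map_sum, Finset.sum_apply']
              have hterm : ∀ z ∈ F, (D.bt.repr (KLaux.rho (a z) • CC z)) w
                  = (if z = w then KLaux.rho (a z) else 0) := by
                intro z hz
                rw [map_smul, Finsupp.smul_apply, hreprCC z (hFlt z hz) w]
                have h2 : D.bt.repr (CC z - D.TT ↑z) w = 0 := by
                  apply (hCCspec z (hFlt z hz)).2.1 w
                  rw [hFk z hz]
                  omega
                rw [h2, add_zero, smul_eq_mul, mul_ite, mul_one, mul_zero]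
              rw [Finset.sum_congr rfl hterm,
                Finset.sum_ite_eq' F w (fun z => KLaux.rho (a z))]
            rw [hval]
            by_cases hwF : w ∈ F
            · rw [if_pos hwF]
              exact KLaux.rho_spec (a w) kk hkk
            · rw [if_neg hwF, sub_zero]
              rcases eq_or_lt_of_le hc with hk | hk
              · by_cases hAll : ∀ kk' : ℤ, 0 ≤ kk' → (a w).coeff kk' = 0
                · exact hAll kk hkk
                · exfalso
                  apply hwF
                  rw [hFdef, Finset.mem_filter]
                  refine ⟨?_, hk.symm, hAll⟩
                  rw [Finsupp.mem_support_iff]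
                  intro h0
                  apply hAll
                  intro kk' _
                  have h7 : a w = 0 := h0
                  rw [h7]
                  rfl
              · by_cases hAll : ∀ kk' : ℤ, 0 ≤ kk' → (a w).coeff kk' = 0
                · exact hAll kk hkk
                · exfalso
                  have h8 := hbad w hAll
                  omega
          exact IHk E3 hE3bar hE3supp hE3bad
      have hEbad : ∀ z : ↥(WHbset ℂ n b),
          ¬ (∀ kk : ℤ, 0 ≤ kk → (D.bt.repr (E - D.TT yy) z).coeff kk = 0) →
          len (z : GLn ℂ n) < N := by
        intro z hbadz
        by_contra hc
        push_neg at hc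
        apply hbadz
        intro kk hkk
        rw [hEsupp z hc]
        rfl
      exact hcorr N E hEbar hEsupp hEbad

end KL
end KLmain

set_option maxSynthPendingDepth 3 in
/-- For every `y ∈ WH_b` there is a unique `C_y ∈ 𝓗̃` with
`bar(C_y) = C_y` and `C_y ≡ T_y mod 𝓗̃_{<0}`. -/
theorem kazhdan_lusztig_basis_exists_unique (n b : ℕ) (hn : 0 < n) (hb : 0 < b)
    (Ht : Type) [Ring Ht] [Algebra (Atil b) Ht]
    (TT : GLn ℂ n → Ht)
    (bt : Module.Basis ↥(WHbset ℂ n b) (Atil b) Ht)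
    (hbt : ∀ x : ↥(WHbset ℂ n b), bt x = TT ↑x)
    (hT1 : TT 1 = 1)
    (hTd : ∀ d ∈ Hbset ℂ n b, ∀ x ∈ WHbset ℂ n b,
      TT d * TT x = TT (d * x) ∧ TT x * TT d = TT (x * d))
    (hTsL : ∀ s ∈ Sset ℂ n, ∀ x ∈ WHbset ℂ n b,
      (len x < len (s * x) → TT s * TT x = TT (s * x)) ∧
      (len (s * x) < len x →
        TT s * TT x = TT (s * x) + vbq b • ∑ᶠ d ∈ Xset ℂ n b s, TT (d * x)))
    (hTsR : ∀ s ∈ Sset ℂ n, ∀ x ∈ WHbset ℂ n b,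
      (len x < len (x * s) → TT x * TT s = TT (x * s)) ∧
      (len (x * s) < len x →
        TT x * TT s = TT (x * s) + vbq b • ∑ᶠ d ∈ Xset ℂ n b s, TT (x * d)))
    (barA : Atil b →+* Atil b)
    (hbarv : barA (LaurentPolynomial.T 1) = LaurentPolynomial.T (-1))
    (hbarC : ∀ r : Zloc b, barA (LaurentPolynomial.C r) = LaurentPolynomial.C r)
    (barH : Ht → Ht)
    (hbarHadd : ∀ h h' : Ht, barH (h + h') = barH h + barH h')
    (hbarHsmul : ∀ (c : Atil b) (h : Ht), barH (c • h) = barA c • barH h)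
    (hbarHT : ∀ x ∈ WHbset ℂ n b, barH (TT x) * TT x⁻¹ = 1 ∧ TT x⁻¹ * barH (TT x) = 1) :
    ∀ y ∈ WHbset ℂ n b, ∃! C : Ht,
      barH C = C ∧ ∀ x : ↥(WHbset ℂ n b), bt.repr (C - TT y) x ∈ AtilNeg b := by
  intro y hy
  set D : KLmain.KL n b Ht :=
    ⟨hn, hb, TT, bt, hbt, hT1, hTd, hTsL, hTsR, barA, hbarv, hbarC, barH,
      hbarHadd, hbarHsmul, hbarHT⟩ with hD
  obtain ⟨C, h1, h2, h3⟩ := D.exists_good (len y) ⟨y, hy⟩ rfl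
  refine ⟨C, ⟨h1, ?_⟩, ?_⟩
  · intro x
    rw [KLaux.mem_AtilNeg_iff]
    intro k hk
    exact h3 x k hk
  · rintro C2 ⟨h1', h2'⟩
    have hdiff0 : C2 - C = 0 := by
      apply D.eq_zero_of_barfix
      · have hstep := D.barH_sub C2 C
        rw [hstep]
        have e1 : D.barH C2 = C2 := h1'
        have e2 : D.barH C = C := h1
        rw [e1, e2]
      · intro z k hk
        have a1 : ((bt.repr (C2 - TT y)) z).coeff k = 0 :=
          (KLaux.mem_AtilNeg_iff _).mp (h2' z) k hk
        have a2 : ((bt.repr (C - TT y)) z).coeff k = 0 := h3 z k hk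
        have e : (bt.repr (C2 - C)) z
            = (bt.repr (C2 - TT y)) z - (bt.repr (C - TT y)) z := by
          rw [show C2 - C = (C2 - TT y) - (C - TT y) from by abel, map_sub,
            Finsupp.sub_apply]
        show ((bt.repr (C2 - C)) z).coeff k = 0
        rw [e]
        have hsubap : ((bt.repr (C2 - TT y)) z - (bt.repr (C - TT y)) z).coeff k
            = ((bt.repr (C2 - TT y)) z).coeff k - ((bt.repr (C - TT y)) z).coeff k := rfl
        rw [hsubap, a1, a2, sub_zero]
    exact sub_eq_zero.mp hdiff0
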